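/- In a quasi-model for the AG/EF fragment, justifications repeating on a path force equal AG-sets: let (W, R, L) be a tree quasi-model of a B(AG) formula φ in which w ∈ L(AGξ) and wRu imply u ∈ L(AGξ), let G(w) := {ξ : w ∈ L(AGξ)}, and suppose each non-root world u on a path π is assigned an injective justification J(u) ∈ F(parent(u)) (an unfulfilled EF-formula of its parent) with the maximality property that u maximizes |G(·)| among all worlds in L(J(u)) reachable from its parent. Then for any path π and indices 1 ≤ i < j, J(π[i]) = J(π[j]) implies G(π[i]) = G(π[j]). -/
import Mathlib


def Serial {W : Type} (R : W → W → Prop) : Prop := ∀ w, ∃ u, R w u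

def IsPath {W : Type} (R : W → W → Prop) (π : ℕ → W) : Prop := ∀ i, R (π i) (π (i+1))

structure Kripke (W : Type) where
  R : W → W → Prop
  V : ℕ → W → Prop

inductive CTL where
  | atom : ℕ → CTL
  | neg  : CTL → CTL
  | and  : CTL → CTL → CTL
  | or   : CTL → CTL → CTL
  | AX : CTL → CTL
  | EX : CTL → CTL
  | AF : CTL → CTL
  | EF : CTL → CTL
  | AG : CTL → CTL
  | EG : CTL → CTL
  | AU : CTL → CTL → CTL
  | EU : CTL → CTL → CTL
  | AR : CTL → CTL → CTL
  | ER : CTL → CTL → CTL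
deriving DecidableEq

def sat {W : Type} (K : Kripke W) : CTL → W → Prop
  | .atom p, w => K.V p w
  | .neg φ, w => ¬ sat K φ w
  | .and φ ψ, w => sat K φ w ∧ sat K ψ w
  | .or φ ψ, w => sat K φ w ∨ sat K ψ w
  | .AX φ, w => ∀ π : ℕ → W, IsPath K.R π → π 0 = w → sat K φ (π 1)
  | .EX φ, w => ∃ π : ℕ → W, IsPath K.R π ∧ π 0 = w ∧ sat K φ (π 1)
  | .AF φ, w => ∀ π : ℕ → W, IsPath K.R π → π 0 = w → ∃ i, sat K φ (π i)
  | .EF φ, w => ∃ π : ℕ → W, IsPath K.R π ∧ π 0 = w ∧ ∃ i, sat K φ (π i)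
  | .AG φ, w => ∀ π : ℕ → W, IsPath K.R π → π 0 = w → ∀ i, sat K φ (π i)
  | .EG φ, w => ∃ π : ℕ → W, IsPath K.R π ∧ π 0 = w ∧ ∀ i, sat K φ (π i)
  | .AU φ ψ, w => ∀ π : ℕ → W, IsPath K.R π → π 0 = w →
      ∃ i, sat K ψ (π i) ∧ ∀ j, j < i → sat K φ (π j)
  | .EU φ ψ, w => ∃ π : ℕ → W, IsPath K.R π ∧ π 0 = w ∧
      ∃ i, sat K ψ (π i) ∧ ∀ j, j < i → sat K φ (π j)
  | .AR φ ψ, w => ∀ π : ℕ → W, IsPath K.R π → π 0 = w →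
      ∀ i, sat K ψ (π i) ∨ ∃ j, j < i ∧ sat K φ (π j)
  | .ER φ ψ, w => ∃ π : ℕ → W, IsPath K.R π ∧ π 0 = w ∧
      ∀ i, sat K ψ (π i) ∨ ∃ j, j < i ∧ sat K φ (π j)

def CTL.len : CTL → ℕ
  | .atom _ => 1
  | .neg φ => φ.len + 1
  | .and φ ψ => φ.len + ψ.len + 1
  | .or φ ψ => φ.len + ψ.len + 1
  | .AX φ => φ.len + 1
  | .EX φ => φ.len + 1
  | .AF φ => φ.len + 1
  | .EF φ => φ.len + 1
  | .AG φ => φ.len + 1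
  | .EG φ => φ.len + 1
  | .AU φ ψ => φ.len + ψ.len + 1
  | .EU φ ψ => φ.len + ψ.len + 1
  | .AR φ ψ => φ.len + ψ.len + 1
  | .ER φ ψ => φ.len + ψ.len + 1

def CTL.td : CTL → ℕ
  | .atom _ => 0
  | .neg φ => φ.td
  | .and φ ψ => max φ.td ψ.td
  | .or φ ψ => max φ.td ψ.td
  | .AX φ => φ.td + 1
  | .EX φ => φ.td + 1
  | .AF φ => φ.td + 1
  | .EF φ => φ.td + 1
  | .AG φ => φ.td + 1
  | .EG φ => φ.td + 1
  | .AU φ ψ => max φ.td ψ.td + 1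
  | .EU φ ψ => max φ.td ψ.td + 1
  | .AR φ ψ => max φ.td ψ.td + 1
  | .ER φ ψ => max φ.td ψ.td + 1

/-- `∼ψ`: the simplified negation of `ψ`. -/
def simpNeg : CTL → CTL
  | .neg φ => φ
  | φ => .neg φ

/-- The closure `cl(φ)` of a CTL formula, as an inductive predicate: the smallest set
containing `φ`, closed under subformulas of Boolean connectives, under subformulas of
temporal operators together with their dualized negations, and under simplified
negation in both directions. -/
inductive Cl (φ : CTL) : CTL → Prop
  | base : Cl φ φ
  | negSub {ψ} : Cl φ (.neg ψ) → Cl φ ψ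
  | andL {ψ ξ} : Cl φ (.and ψ ξ) → Cl φ ψ
  | andR {ψ ξ} : Cl φ (.and ψ ξ) → Cl φ ξ
  | orL {ψ ξ} : Cl φ (.or ψ ξ) → Cl φ ψ
  | orR {ψ ξ} : Cl φ (.or ψ ξ) → Cl φ ξ
  | ax {ψ} : Cl φ (.AX ψ) → Cl φ ψ
  | axD {ψ} : Cl φ (.AX ψ) → Cl φ (.EX (simpNeg ψ))
  | ex {ψ} : Cl φ (.EX ψ) → Cl φ ψ
  | exD {ψ} : Cl φ (.EX ψ) → Cl φ (.AX (simpNeg ψ))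
  | af {ψ} : Cl φ (.AF ψ) → Cl φ ψ
  | afD {ψ} : Cl φ (.AF ψ) → Cl φ (.EG (simpNeg ψ))
  | ef {ψ} : Cl φ (.EF ψ) → Cl φ ψ
  | efD {ψ} : Cl φ (.EF ψ) → Cl φ (.AG (simpNeg ψ))
  | ag {ψ} : Cl φ (.AG ψ) → Cl φ ψ
  | agD {ψ} : Cl φ (.AG ψ) → Cl φ (.EF (simpNeg ψ))
  | eg {ψ} : Cl φ (.EG ψ) → Cl φ ψ
  | egD {ψ} : Cl φ (.EG ψ) → Cl φ (.AF (simpNeg ψ))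
  | auL {ψ ξ} : Cl φ (.AU ψ ξ) → Cl φ ψ
  | auR {ψ ξ} : Cl φ (.AU ψ ξ) → Cl φ ξ
  | auD {ψ ξ} : Cl φ (.AU ψ ξ) → Cl φ (.ER (simpNeg ψ) (simpNeg ξ))
  | euL {ψ ξ} : Cl φ (.EU ψ ξ) → Cl φ ψ
  | euR {ψ ξ} : Cl φ (.EU ψ ξ) → Cl φ ξ
  | euD {ψ ξ} : Cl φ (.EU ψ ξ) → Cl φ (.AR (simpNeg ψ) (simpNeg ξ))
  | arL {ψ ξ} : Cl φ (.AR ψ ξ) → Cl φ ψ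
  | arR {ψ ξ} : Cl φ (.AR ψ ξ) → Cl φ ξ
  | arD {ψ ξ} : Cl φ (.AR ψ ξ) → Cl φ (.EU (simpNeg ψ) (simpNeg ξ))
  | erL {ψ ξ} : Cl φ (.ER ψ ξ) → Cl φ ψ
  | erR {ψ ξ} : Cl φ (.ER ψ ξ) → Cl φ ξ
  | erD {ψ ξ} : Cl φ (.ER ψ ξ) → Cl φ (.AU (simpNeg ψ) (simpNeg ξ))
  | sneg {ψ} : Cl φ ψ → Cl φ (simpNeg ψ)
  | sneg' {ψ} : Cl φ (simpNeg ψ) → Cl φ ψ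

/-- Occurrence of an atomic proposition in a formula. -/
def atomIn (p : ℕ) : CTL → Prop
  | .atom q => p = q
  | .neg φ => atomIn p φ
  | .and φ ψ => atomIn p φ ∨ atomIn p ψ
  | .or φ ψ => atomIn p φ ∨ atomIn p ψ
  | .AX φ => atomIn p φ
  | .EX φ => atomIn p φ
  | .AF φ => atomIn p φ
  | .EF φ => atomIn p φ
  | .AG φ => atomIn p φ
  | .EG φ => atomIn p φ
  | .AU φ ψ => atomIn p φ ∨ atomIn p ψ
  | .EU φ ψ => atomIn p φ ∨ atomIn p ψ
  | .AR φ ψ => atomIn p φ ∨ atomIn p ψ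
  | .ER φ ψ => atomIn p φ ∨ atomIn p ψ

/-- A quasi-model of `φ`: a serial Kripke frame with an extended labeling
`L : cl(φ) → 𝒫(W)` obeying the local quasi-label conditions (Q1)–(Q4), the path
conditions (Q5) for labeled `A`- and `E`-formulas, and (Q6) `L(φ) ≠ ∅`. -/
structure QuasiModel (φ : CTL) (W : Type) where
  R : W → W → Prop
  L : CTL → Set W
  serial : Serial R
  -- (Q1): local Boolean conditions
  q1_and : ∀ ψ ξ w, Cl φ (.and ψ ξ) → w ∈ L (.and ψ ξ) → w ∈ L ψ ∧ w ∈ L ξ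
  q1_andN : ∀ ψ ξ w, Cl φ (.and ψ ξ) → w ∈ L (simpNeg (.and ψ ξ)) →
    w ∈ L (simpNeg ψ) ∨ w ∈ L (simpNeg ξ)
  q1_or : ∀ ψ ξ w, Cl φ (.or ψ ξ) → w ∈ L (.or ψ ξ) → w ∈ L ψ ∨ w ∈ L ξ
  q1_orN : ∀ ψ ξ w, Cl φ (.or ψ ξ) → w ∈ L (simpNeg (.or ψ ξ)) →
    w ∈ L (simpNeg ψ) ∧ w ∈ L (simpNeg ξ)
  q1_neg : ∀ ψ w, Cl φ (.neg ψ) → w ∈ L (.neg ψ) → w ∈ L (simpNeg ψ)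
  -- (Q2): consistency
  q2 : ∀ ψ w, Cl φ ψ → ¬ (w ∈ L ψ ∧ w ∈ L (simpNeg ψ))
  -- (Q3): negated unary path-quantified formulas are pushed to duals
  q3_ax : ∀ ψ w, Cl φ (.neg (.AX ψ)) → w ∈ L (.neg (.AX ψ)) → w ∈ L (.EX (simpNeg ψ))
  q3_ex : ∀ ψ w, Cl φ (.neg (.EX ψ)) → w ∈ L (.neg (.EX ψ)) → w ∈ L (.AX (simpNeg ψ))
  q3_af : ∀ ψ w, Cl φ (.neg (.AF ψ)) → w ∈ L (.neg (.AF ψ)) → w ∈ L (.EG (simpNeg ψ))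
  q3_ef : ∀ ψ w, Cl φ (.neg (.EF ψ)) → w ∈ L (.neg (.EF ψ)) → w ∈ L (.AG (simpNeg ψ))
  q3_ag : ∀ ψ w, Cl φ (.neg (.AG ψ)) → w ∈ L (.neg (.AG ψ)) → w ∈ L (.EF (simpNeg ψ))
  q3_eg : ∀ ψ w, Cl φ (.neg (.EG ψ)) → w ∈ L (.neg (.EG ψ)) → w ∈ L (.AF (simpNeg ψ))
  -- (Q4): negated binary path-quantified formulas are pushed to duals
  q4_au : ∀ ψ ξ w, Cl φ (.neg (.AU ψ ξ)) → w ∈ L (.neg (.AU ψ ξ)) →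
    w ∈ L (.ER (simpNeg ψ) (simpNeg ξ))
  q4_eu : ∀ ψ ξ w, Cl φ (.neg (.EU ψ ξ)) → w ∈ L (.neg (.EU ψ ξ)) →
    w ∈ L (.AR (simpNeg ψ) (simpNeg ξ))
  q4_ar : ∀ ψ ξ w, Cl φ (.neg (.AR ψ ξ)) → w ∈ L (.neg (.AR ψ ξ)) →
    w ∈ L (.EU (simpNeg ψ) (simpNeg ξ))
  q4_er : ∀ ψ ξ w, Cl φ (.neg (.ER ψ ξ)) → w ∈ L (.neg (.ER ψ ξ)) →
    w ∈ L (.AU (simpNeg ψ) (simpNeg ξ))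
  -- (Q5): path conditions
  q5_ax : ∀ ψ w, Cl φ (.AX ψ) → w ∈ L (.AX ψ) →
    ∀ π : ℕ → W, IsPath R π → π 0 = w → π 1 ∈ L ψ
  q5_ex : ∀ ψ w, Cl φ (.EX ψ) → w ∈ L (.EX ψ) →
    ∃ π : ℕ → W, IsPath R π ∧ π 0 = w ∧ π 1 ∈ L ψ
  q5_af : ∀ ψ w, Cl φ (.AF ψ) → w ∈ L (.AF ψ) →
    ∀ π : ℕ → W, IsPath R π → π 0 = w → ∃ i, π i ∈ L ψ
  q5_ef : ∀ ψ w, Cl φ (.EF ψ) → w ∈ L (.EF ψ) →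
    ∃ π : ℕ → W, IsPath R π ∧ π 0 = w ∧ ∃ i, π i ∈ L ψ
  q5_ag : ∀ ψ w, Cl φ (.AG ψ) → w ∈ L (.AG ψ) →
    ∀ π : ℕ → W, IsPath R π → π 0 = w → ∀ i, π i ∈ L ψ
  q5_eg : ∀ ψ w, Cl φ (.EG ψ) → w ∈ L (.EG ψ) →
    ∃ π : ℕ → W, IsPath R π ∧ π 0 = w ∧ ∀ i, π i ∈ L ψ
  q5_au : ∀ ψ ξ w, Cl φ (.AU ψ ξ) → w ∈ L (.AU ψ ξ) →
    ∀ π : ℕ → W, IsPath R π → π 0 = w → ∃ i, π i ∈ L ξ ∧ ∀ j, j < i → π j ∈ L ψ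
  q5_eu : ∀ ψ ξ w, Cl φ (.EU ψ ξ) → w ∈ L (.EU ψ ξ) →
    ∃ π : ℕ → W, IsPath R π ∧ π 0 = w ∧ ∃ i, π i ∈ L ξ ∧ ∀ j, j < i → π j ∈ L ψ
  q5_ar : ∀ ψ ξ w, Cl φ (.AR ψ ξ) → w ∈ L (.AR ψ ξ) →
    ∀ π : ℕ → W, IsPath R π → π 0 = w → ∀ i, π i ∈ L ξ ∨ ∃ j, j < i ∧ π j ∈ L ψ
  q5_er : ∀ ψ ξ w, Cl φ (.ER ψ ξ) → w ∈ L (.ER ψ ξ) →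
    ∃ π : ℕ → W, IsPath R π ∧ π 0 = w ∧ ∀ i, π i ∈ L ξ ∨ ∃ j, j < i ∧ π j ∈ L ψ
  -- (Q6)
  q6 : ∃ w, w ∈ L φ

/-- In a tree quasi-model for the `AG`/`EF` fragment in which `AG`-labels are monotone
along edges, if two worlds on a path carry the same justification (an unfulfilled
`EF`-formula of their respective parents, chosen maximally with respect to the number
of labeled `AG`-formulas among all candidates reachable from the parent), then their
sets of labeled `AG`-formulas coincide. -/
theorem justification_repeat_forces_equal_AG_sets
    (φ : CTL) (W : Type) (Q : QuasiModel φ W)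
    -- tree: every world has at most one predecessor
    (htree : ∀ u v v' : W, Q.R v u → Q.R v' u → v = v')
    -- monotonicity of AG-labels along edges
    (hmono : ∀ (ξ : CTL) (w u : W), Q.R w u → w ∈ Q.L (.AG ξ) → u ∈ Q.L (.AG ξ))
    -- G(w) := the set of AG-formulas labeled in w (finite, as cl(φ) is finite)
    (G : W → Set CTL) (hG : ∀ w, G w = {ξ : CTL | w ∈ Q.L (.AG ξ)})
    (hGfin : ∀ w, (G w).Finite)
    -- a path through the quasi-model with justifications J
    (π : ℕ → W) (hπ : IsPath Q.R π) (J : ℕ → CTL)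
    -- each non-root world π(i+1) is labeled with its justification J(i+1),
    -- which is an unfulfilled EF-formula of its parent π(i)
    (hJmem : ∀ i : ℕ, π (i+1) ∈ Q.L (J (i+1)))
    (hJunful : ∀ i : ℕ, π i ∈ Q.L (.EF (J (i+1))) ∧ π i ∉ Q.L (J (i+1)))
    -- maximality: π(i+1) maximizes |G(·)| among all worlds labeled J(i+1)
    -- reachable from the parent π(i)
    (hJmax : ∀ (i : ℕ) (v : W), Relation.ReflTransGen Q.R (π i) v →
      v ∈ Q.L (J (i+1)) → (G v).ncard ≤ (G (π (i+1))).ncard) :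
    ∀ i j : ℕ, 1 ≤ i → i < j → J i = J j → G (π i) = G (π j) := by
  intro i j hi hij hJ
  have hsub : ∀ a b : ℕ, a ≤ b → G (π a) ⊆ G (π b) := by
    intro a b hab
    induction b, hab using Nat.le_induction with
    | base => exact subset_rfl
    | succ n hn ih =>
      intro ξ hξ
      have := ih hξ
      rw [hG] at this ⊢
      exact hmono ξ _ _ (hπ n) this
  have hreach : ∀ a b : ℕ, a ≤ b → Relation.ReflTransGen Q.R (π a) (π b) := by
    intro a b hab
    induction b, hab using Nat.le_induction with
    | base => exact Relation.ReflTransGen.refl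
    | succ n hn ih => exact ih.tail (hπ n)
  have hji : j - 1 + 1 = j := by omega
  have hii : i - 1 + 1 = i := by omega
  have hmemj : π j ∈ Q.L (J i) := by
    rw [hJ, ← hji]; exact hJmem (j - 1)
  have hcard : (G (π j)).ncard ≤ (G (π i)).ncard := by
    have := hJmax (i - 1) (π j) (hreach _ _ (by omega)) (by rwa [hii])
    rwa [hii] at this
  exact Set.eq_of_subset_of_ncard_le (hsub i j (le_of_lt hij)) hcard (hGfin _)
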